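/- arXiv:2104.01719 — 5 statements merged into one kernel-verified Lean document; each statement's English description precedes it below -/
import Mathlib

section
/- For all indices i,k∈{1,2,3} and every x∈ℝ², the second directional derivative of φ_i along the edge tangent t_k satisfies ∂²_{t_k}φ_i(x) = −2δ_{ki}/ℓ_k², i.e., the second derivative of the map s ↦ φ_i(x + s·t_k) equals −2/ℓ_k² when i=k and equals 0 when i≠k. -/
/-! Restricted to the line `s ↦ x + s • t_k`, each barycentric coordinate is affine in `s`, so
`φ_i = λ_{i-1} λ_{i+1}` is quadratic with second derivative `2 σ_{i-1} σ_{i+1}`, where `σ_j` is the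
slope of `λ_j` along `t_k`. Writing `p_{k+1} - p_{k-1} = c • t_k`, the slope satisfies
`c σ_j = λ_j(p_{k+1}) - λ_j(p_{k-1}) = δ_{j,k+1} - δ_{j,k-1}` (so `c ≠ 0`, taking `j = k + 1`),
and `c² = ℓ_k²` because `t_k` is a unit vector. The product of these differences for `j = i ∓ 1` is `-δ_{ki}`. -/

section AffineAlongLine

variable {f : (Fin 2 → ℝ) → ℝ} {a b c : ℝ}

theorem apply_add_smul_of_affine (hf : ∀ x, f x = a * x 0 + b * x 1 + c)
    (x v : Fin 2 → ℝ) (s : ℝ) : f (x + s • v) = f x + s * (a * v 0 + b * v 1) := by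
  simp only [hf, Pi.add_apply, Pi.smul_apply, smul_eq_mul]
  ring

theorem mul_slope_eq_sub_of_affine (hf : ∀ x, f x = a * x 0 + b * x 1 + c)
    {y z v : Fin 2 → ℝ} {e : ℝ} (h : z - y = e • v) :
    e * (a * v 0 + b * v 1) = f z - f y := by
  rw [eq_add_of_sub_eq' h, apply_add_smul_of_affine hf]
  ring

end AffineAlongLine

theorem iteratedDeriv_two_mul_affine (α β γ δ s : ℝ) :
    iteratedDeriv 2 (fun s => (α + s * β) * (γ + s * δ)) s = 2 * (β * δ) := by
  have hderiv : deriv (fun s => (α + s * β) * (γ + s * δ)) =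
      fun s => 2 * (β * δ) * s + (β * γ + α * δ) := by
    funext s
    simp only [differentiableAt_const, differentiableAt_const_add_iff, differentiableAt_fun_id,
      DifferentiableAt.fun_mul, deriv_fun_mul, deriv_fun_add, deriv_const', deriv_id'', one_mul,
      mul_zero, add_zero, zero_add]
    ring
  rw [iteratedDeriv_succ, iteratedDeriv_one, hderiv]
  simp

theorem sq_sqrt_sum_sq_of_eq_smul {w v : Fin 2 → ℝ} {e : ℝ} (hv : v 0 ^ 2 + v 1 ^ 2 = 1)
    (h : w = e • v) : √(w 0 ^ 2 + w 1 ^ 2) ^ 2 = e ^ 2 := by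
  rw [Real.sq_sqrt (by positivity), h]
  simp only [Pi.smul_apply, smul_eq_mul]
  linear_combination e ^ 2 * hv

namespace ZMod

theorem three_one_ne_neg_one : (1 : ZMod 3) ≠ -1 := by decide

theorem three_add_one_ne_sub_one (k : ZMod 3) : k + 1 ≠ k - 1 := by
  simpa [sub_eq_add_neg] using three_one_ne_neg_one

theorem three_eq_or_eq_add_one_or_eq_sub_one (i k : ZMod 3) : k = i ∨ k = i + 1 ∨ k = i - 1 := by
  revert i k
  decide

theorem three_kronecker_edge_product {R : Type*} [Ring R] (i k : ZMod 3) :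
    ((if i - 1 = k + 1 then 1 else 0) - (if i - 1 = k - 1 then 1 else 0)) *
      ((if i + 1 = k + 1 then 1 else 0) - (if i + 1 = k - 1 then 1 else 0)) =
      -(if k = i then (1 : R) else 0) := by
  obtain rfl | rfl | rfl := three_eq_or_eq_add_one_or_eq_sub_one i k <;>
    simp [sub_eq_add_neg, add_assoc, three_one_ne_neg_one, three_one_ne_neg_one.symm]

end ZMod

theorem bubble_second_tangential_derivative_general
    (p : ZMod 3 → Fin 2 → ℝ)
    (lam : ZMod 3 → (Fin 2 → ℝ) → ℝ)
    (hlam_aff : ∀ k, ∃ a b c : ℝ, ∀ x, lam k x = a * x 0 + b * x 1 + c)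
    (hlam_val : ∀ k j, lam k (p j) = if k = j then 1 else 0)
    (t : ZMod 3 → Fin 2 → ℝ)
    (ht_unit : ∀ k, (t k 0) ^ 2 + (t k 1) ^ 2 = 1)
    (ht_par : ∀ k, ∃ c : ℝ, (fun j => p (k + 1) j - p (k - 1) j) = c • t k)
    (L : ZMod 3 → ℝ)
    (hL : ∀ k, L k =
      Real.sqrt ((p (k + 1) 0 - p (k - 1) 0) ^ 2 + (p (k + 1) 1 - p (k - 1) 1) ^ 2))
    (i k : ZMod 3) (x : Fin 2 → ℝ) (s : ℝ) :
    iteratedDeriv 2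
        (fun s : ℝ => lam (i - 1) (x + s • t k) * lam (i + 1) (x + s • t k)) s
      = -2 * (if k = i then 1 else 0) / (L k) ^ 2 := by
  choose a b c hlam using hlam_aff
  obtain ⟨e, he⟩ := ht_par k
  set σ : ZMod 3 → ℝ := fun j => a j * t k 0 + b j * t k 1
  have hσ : ∀ j, e * σ j = (if j = k + 1 then 1 else 0) - (if j = k - 1 then 1 else 0) :=
    fun j => by rw [mul_slope_eq_sub_of_affine (hlam j) he, hlam_val, hlam_val]
  have he0 : e ≠ 0 := by
    rintro rfl
    simpa [ZMod.three_add_one_ne_sub_one] using hσ (k + 1)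
  have hline : (fun s => lam (i - 1) (x + s • t k) * lam (i + 1) (x + s • t k)) =
      fun s => (lam (i - 1) x + s * σ (i - 1)) * (lam (i + 1) x + s * σ (i + 1)) := by
    funext s
    rw [apply_add_smul_of_affine (hlam _), apply_add_smul_of_affine (hlam _)]
  have hdelta := ZMod.three_kronecker_edge_product (R := ℝ) i k
  rw [← hσ, ← hσ] at hdelta
  rw [hline, iteratedDeriv_two_mul_affine, hL k, sq_sqrt_sum_sq_of_eq_smul (ht_unit k) he,
    eq_div_iff (pow_ne_zero 2 he0)]
  linear_combination 2 * hdelta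

/-- In a nondegenerate triangle with vertices `p₁, p₂, p₃` (indices mod 3),
with barycentric coordinates `λ_k`, quadratic bubbles `φ_k = λ_{k−1} λ_{k+1}`,
unit tangents `t_k` parallel to the edge `e_k` joining `p_{k−1}` and `p_{k+1}`,
and edge lengths `ℓ_k`, the second directional derivative of `φ_i` along `t_k`
satisfies `∂²_{t_k} φ_i = −2 δ_{ki} / ℓ_k²` at every point. -/
theorem bubble_second_tangential_derivative
    (p : ZMod 3 → Fin 2 → ℝ) (hp : AffineIndependent ℝ p)
    (lam : ZMod 3 → (Fin 2 → ℝ) → ℝ)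
    (hlam_aff : ∀ k, ∃ a b c : ℝ, ∀ x, lam k x = a * x 0 + b * x 1 + c)
    (hlam_val : ∀ k j, lam k (p j) = if k = j then 1 else 0)
    (t : ZMod 3 → Fin 2 → ℝ)
    (ht_unit : ∀ k, (t k 0) ^ 2 + (t k 1) ^ 2 = 1)
    (ht_par : ∀ k, ∃ c : ℝ, (fun j => p (k + 1) j - p (k - 1) j) = c • t k)
    (L : ZMod 3 → ℝ)
    (hL : ∀ k, L k =
      Real.sqrt ((p (k + 1) 0 - p (k - 1) 0) ^ 2 + (p (k + 1) 1 - p (k - 1) 1) ^ 2))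
    (i k : ZMod 3) (x : Fin 2 → ℝ) (s : ℝ) :
    iteratedDeriv 2
        (fun s : ℝ => lam (i - 1) (x + s • t k) * lam (i + 1) (x + s • t k)) s
      = -2 * (if k = i then 1 else 0) / (L k) ^ 2 :=
  bubble_second_tangential_derivative_general p lam hlam_aff hlam_val t ht_unit ht_par L hL i k x s
end

section
/- Let r: ℝ²→ℝ² be a differentiable vector field and set τ := Curl^s r. Then for every unit vector n in ℝ², with t := n^⊥, and every x∈ℝ², the identities tᵀ(∂_n r)(x) = tᵀ τ(x) t and ½( nᵀ(∂_n r)(x) − tᵀ(∂_t r)(x) ) = tᵀ τ(x) n hold. -/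
open Matrix

/-- `Curl φ` of a vector field `φ : ℝ² → ℝ²`: the 2×2 matrix field whose `i`-th
row is `(curl φ_i)ᵀ = (−∂_{x₂} φ_i, ∂_{x₁} φ_i)`. -/
noncomputable def Curl (r : (Fin 2 → ℝ) → Fin 2 → ℝ) (x : Fin 2 → ℝ) :
    Matrix (Fin 2) (Fin 2) ℝ :=
  Matrix.of fun i j =>
    if j = 0 then -(fderiv ℝ r x ![0, 1] i) else fderiv ℝ r x ![1, 0] i

/-- The symmetric part `Curl^s φ = (Curl φ + (Curl φ)ᵀ)/2`. -/
noncomputable def CurlS (r : (Fin 2 → ℝ) → Fin 2 → ℝ) (x : Fin 2 → ℝ) :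
    Matrix (Fin 2) (Fin 2) ℝ :=
  (2⁻¹ : ℝ) • (Curl r x + (Curl r x)ᵀ)

/-- Let `r : ℝ² → ℝ²` be a differentiable vector field and `τ = Curl^s r`. For every
unit vector `n` with `t = n^⊥ = (−n₂, n₁)ᵀ` and every `x`, one has
`tᵀ(∂_n r)(x) = tᵀ τ(x) t` and `½(nᵀ(∂_n r)(x) − tᵀ(∂_t r)(x)) = tᵀ τ(x) n`. -/
theorem curlS_normal_tangent_identities
    (r : (Fin 2 → ℝ) → Fin 2 → ℝ) (hr : Differentiable ℝ r)
    (n : Fin 2 → ℝ) (hn : (n 0) ^ 2 + (n 1) ^ 2 = 1) (x : Fin 2 → ℝ) :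
    ![-(n 1), n 0] ⬝ᵥ (fderiv ℝ r x n) =
        ![-(n 1), n 0] ⬝ᵥ (CurlS r x) *ᵥ ![-(n 1), n 0] ∧
    (1 / 2 : ℝ) * (n ⬝ᵥ (fderiv ℝ r x n) -
        ![-(n 1), n 0] ⬝ᵥ (fderiv ℝ r x ![-(n 1), n 0])) =
      ![-(n 1), n 0] ⬝ᵥ (CurlS r x) *ᵥ n := by
  have hL : ∀ v : Fin 2 → ℝ, fderiv ℝ r x v
      = v 0 • fderiv ℝ r x ![1, 0] + v 1 • fderiv ℝ r x ![0, 1] := by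
    intro v
    have hv : v = v 0 • (![1, 0] : Fin 2 → ℝ) + v 1 • ![0, 1] := by
      funext i; fin_cases i <;> simp
    conv_lhs => rw [hv]
    rw [map_add, (fderiv ℝ r x).map_smul, (fderiv ℝ r x).map_smul]
  rw [hL n, hL ![-(n 1), n 0]]
  set A := fderiv ℝ r x ![1, 0] with hA
  set B := fderiv ℝ r x ![0, 1] with hB
  constructor <;>
  · simp only [CurlS, Curl, dotProduct, Matrix.mulVec, Fin.sum_univ_two,
      Matrix.cons_val_zero, Matrix.cons_val_one, Matrix.head_cons, Pi.add_apply,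
      Pi.smul_apply, smul_eq_mul, Matrix.smul_apply, Matrix.add_apply,
      Matrix.transpose_apply, Matrix.of_apply, if_pos, if_neg, ← hA, ← hB]
    norm_num
    nlinarith [hn, sq_nonneg (n 0), sq_nonneg (n 1)]
end

section
/- For all indices i,k∈{1,2,3} and every constant vector c∈ℝ², the normal-normal component of Curl^s(φ_i c) has vanishing mean over the edge e_k: ∫₀¹ n_kᵀ [Curl^s(φ_i c)]((1−s)p_{k−1} + s p_{k+1}) n_k ds = 0. In particular, ∫_{e_k} (Curl^s(φ_i e_j))_{nn} ds = 0 for the coordinate unit vectors e₁=(1,0)ᵀ and e₂=(0,1)ᵀ. -/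
open Matrix

/-!
On an edge `γ(s) = (1 - s) a + s b` with normal `n`, the quadratic form `nᵀ Curl^s(f c) n`
equals `(n · c) ∂_t f` for the rotated normal `t = (n₁, -n₀)`, which is a multiple
`μ (b - a)` of the edge direction. The integrand is therefore `μ (n · c) (f ∘ γ)'`, whose
integral is `μ (n · c) (f b - f a)`; the bubble `λ_{i-1} λ_{i+1}` vanishes at every vertex.
-/

open intervalIntegral

def rotCW (v : Fin 2 → ℝ) : Fin 2 → ℝ := ![v 1, -v 0]

theorem exists_rotCW_eq_smul_of_dotProduct_eq_zero {n d : Fin 2 → ℝ} (hd : d ≠ 0)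
    (hnd : n ⬝ᵥ d = 0) :
    ∃ μ : ℝ, rotCW n = μ • d := by
  have hdd : d 0 ^ 2 + d 1 ^ 2 ≠ 0 := by
    contrapose! hd
    ext i
    fin_cases i <;> simp only [Fin.zero_eta, Fin.mk_one, Fin.isValue, Pi.zero_apply] <;>
      nlinarith [sq_nonneg (d 0), sq_nonneg (d 1)]
  simp only [dotProduct, Fin.sum_univ_two] at hnd
  refine ⟨(n 1 * d 0 - n 0 * d 1) / (d 0 ^ 2 + d 1 ^ 2), ?_⟩
  ext i
  fin_cases i <;>
    simp only [rotCW, Fin.zero_eta, Fin.mk_one, Fin.isValue, cons_val_zero, cons_val_one,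
      cons_val_fin_one, Pi.smul_apply, smul_eq_mul] <;>
    field_simp
  · linear_combination d 1 * hnd
  · linear_combination -d 0 * hnd

theorem Curl_mulVec (r : (Fin 2 → ℝ) → Fin 2 → ℝ) (x v : Fin 2 → ℝ) :
    Curl r x *ᵥ v = fderiv ℝ r x (rotCW v) := by
  have hv : rotCW v = v 1 • ![1, 0] + (-v 0) • ![0, 1] := by
    ext i; fin_cases i <;> simp [rotCW]
  rw [hv, map_add, map_smul, map_smul]
  ext i
  simp only [mulVec, dotProduct, Curl, of_apply, Fin.sum_univ_two, Fin.isValue, ↓reduceIte,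
    one_ne_zero, Pi.add_apply, Pi.smul_apply, smul_eq_mul]
  ring

theorem dotProduct_CurlS_mulVec_self (r : (Fin 2 → ℝ) → Fin 2 → ℝ) (x v : Fin 2 → ℝ) :
    v ⬝ᵥ CurlS r x *ᵥ v = v ⬝ᵥ Curl r x *ᵥ v := by
  rw [CurlS, smul_mulVec, add_mulVec, dotProduct_smul, dotProduct_add,
    dotProduct_mulVec v (Curl r x)ᵀ, vecMul_transpose, dotProduct_comm, smul_eq_mul]
  ring

theorem dotProduct_CurlS_smul_const_mulVec_self {f : (Fin 2 → ℝ) → ℝ} {x : Fin 2 → ℝ}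
    (hf : DifferentiableAt ℝ f x) (c v : Fin 2 → ℝ) :
    v ⬝ᵥ CurlS (fun y => f y • c) x *ᵥ v = (v ⬝ᵥ c) * fderiv ℝ f x (rotCW v) := by
  rw [dotProduct_CurlS_mulVec_self, Curl_mulVec, fderiv_smul_const hf,
    ContinuousLinearMap.smulRight_apply, dotProduct_smul, smul_eq_mul, mul_comm]

theorem integral_segment_nn_CurlS_smul_const_eq_zero {f : (Fin 2 → ℝ) → ℝ}
    (hf : ContDiff ℝ 1 f) {a b n : Fin 2 → ℝ} (hab : a ≠ b) (hn : n ⬝ᵥ (b - a) = 0)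
    (ha : f a = 0) (hb : f b = 0) (c : Fin 2 → ℝ) :
    ∫ s in (0:ℝ)..1,
      n ⬝ᵥ CurlS (fun y => f y • c) ((1 - s) • a + s • b) *ᵥ n = 0 := by
  obtain ⟨μ, hμ⟩ := exists_rotCW_eq_smul_of_dotProduct_eq_zero (sub_ne_zero.mpr hab.symm) hn
  set γ : ℝ → Fin 2 → ℝ := fun s => (1 - s) • a + s • b
  have hγ : ∀ s, HasDerivAt γ (b - a) s := by
    intro s
    have h : γ = fun t => a + t • (b - a) := by ext t : 1; simp only [γ]; module
    rw [h]
    simpa using ((hasDerivAt_id s).smul_const (b - a)).const_add a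
  have hfγ : ∀ s, HasDerivAt (fun s => f (γ s)) (fderiv ℝ f (γ s) (b - a)) s := fun s =>
    ((hf.differentiable one_ne_zero (γ s)).hasFDerivAt).comp_hasDerivAt s (hγ s)
  have hcont : Continuous fun s => fderiv ℝ f (γ s) (b - a) :=
    ((hf.continuous_fderiv one_ne_zero).comp (continuous_iff_continuousAt.2 fun s =>
      (hγ s).continuousAt)).clm_apply continuous_const
  calc ∫ s in (0:ℝ)..1, n ⬝ᵥ CurlS (fun y => f y • c) (γ s) *ᵥ n
      = ∫ s in (0:ℝ)..1, (n ⬝ᵥ c) * μ * fderiv ℝ f (γ s) (b - a) := by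
        congr 1; ext s
        rw [dotProduct_CurlS_smul_const_mulVec_self (hf.differentiable one_ne_zero _), hμ,
          map_smul, smul_eq_mul, mul_assoc]
    _ = (n ⬝ᵥ c) * μ * (f (γ 1) - f (γ 0)) := by
        rw [integral_const_mul, integral_eq_sub_of_hasDerivAt (fun s _ => hfγ s)
          (hcont.intervalIntegrable 0 1)]
    _ = 0 := by simp [γ, ha, hb]

theorem contDiff_of_eq_affine {g : (Fin 2 → ℝ) → ℝ}
    (hg : ∃ a b c : ℝ, ∀ x, g x = a * x 0 + b * x 1 + c) {m : WithTop ℕ∞} :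
    ContDiff ℝ m g := by
  obtain ⟨a, b, c, hg⟩ := hg
  rw [funext hg]
  fun_prop

theorem ZMod.three_sub_one_ne_add_one (k : ZMod 3) : k - 1 ≠ k + 1 := by
  revert k; decide

section Barycentric

variable {p : ZMod 3 → Fin 2 → ℝ} {lam : ZMod 3 → (Fin 2 → ℝ) → ℝ}

theorem vertex_ne_of_barycentric (hlam : ∀ k j, lam k (p j) = if k = j then 1 else 0)
    (k : ZMod 3) : p (k - 1) ≠ p (k + 1) := by
  intro h
  have := hlam (k + 1) (k - 1)
  rw [h, hlam, if_pos rfl, if_neg (ZMod.three_sub_one_ne_add_one k).symm] at this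
  exact one_ne_zero this

theorem bubble_vertex_eq_zero (hlam : ∀ k j, lam k (p j) = if k = j then 1 else 0)
    (i j : ZMod 3) : lam (i - 1) (p j) * lam (i + 1) (p j) = 0 := by
  rw [hlam, hlam]
  have := ZMod.three_sub_one_ne_add_one i
  split_ifs with h₁ h₂ <;> simp_all

end Barycentric

theorem curlS_bubble_vanishing_edge_moment_general
    (p : ZMod 3 → Fin 2 → ℝ)
    (lam : ZMod 3 → (Fin 2 → ℝ) → ℝ)
    (hlam_aff : ∀ k, ∃ a b c : ℝ, ∀ x, lam k x = a * x 0 + b * x 1 + c)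
    (hlam_val : ∀ k j, lam k (p j) = if k = j then 1 else 0)
    (n : ZMod 3 → Fin 2 → ℝ)
    (hn_perp : ∀ k, n k ⬝ᵥ (fun j => p (k + 1) j - p (k - 1) j) = 0)
    (i k : ZMod 3) (c : Fin 2 → ℝ) :
    ∫ s in (0:ℝ)..1,
        n k ⬝ᵥ (CurlS (fun y => (lam (i - 1) y * lam (i + 1) y) • c)
          ((1 - s) • p (k - 1) + s • p (k + 1))) *ᵥ n k = 0 :=
  integral_segment_nn_CurlS_smul_const_eq_zero
    ((contDiff_of_eq_affine (hlam_aff _)).mul (contDiff_of_eq_affine (hlam_aff _)))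
    (vertex_ne_of_barycentric hlam_val k) (hn_perp k)
    (bubble_vertex_eq_zero hlam_val i _) (bubble_vertex_eq_zero hlam_val i _) c

/-- On a nondegenerate triangle with vertices `p₁, p₂, p₃` (indices mod 3),
barycentric coordinates `λ_k`, bubbles `φ_k = λ_{k−1} λ_{k+1}`, and unit normals
`n_k` to the edges `e_k`, for all `i, k` and every constant vector `c ∈ ℝ²`,
the normal-normal component of `Curl^s(φ_i c)` has vanishing mean over `e_k`:
`∫₀¹ n_kᵀ [Curl^s(φ_i c)]((1−s)p_{k−1} + s p_{k+1}) n_k ds = 0`. -/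
theorem curlS_bubble_vanishing_edge_moment
    (p : ZMod 3 → Fin 2 → ℝ) (hp : AffineIndependent ℝ p)
    (lam : ZMod 3 → (Fin 2 → ℝ) → ℝ)
    (hlam_aff : ∀ k, ∃ a b c : ℝ, ∀ x, lam k x = a * x 0 + b * x 1 + c)
    (hlam_val : ∀ k j, lam k (p j) = if k = j then 1 else 0)
    (n : ZMod 3 → Fin 2 → ℝ)
    (hn_unit : ∀ k, (n k 0) ^ 2 + (n k 1) ^ 2 = 1)
    (hn_perp : ∀ k, n k ⬝ᵥ (fun j => p (k + 1) j - p (k - 1) j) = 0)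
    (i k : ZMod 3) (c : Fin 2 → ℝ) :
    ∫ s in (0:ℝ)..1,
        n k ⬝ᵥ (CurlS (fun y => (lam (i - 1) y * lam (i + 1) y) • c)
          ((1 - s) • p (k - 1) + s • p (k + 1))) *ᵥ n k = 0 :=
  curlS_bubble_vanishing_edge_moment_general p lam hlam_aff hlam_val n hn_perp i k c
end

section
/- If constant vectors γ₁,γ₂,γ₃∈ℝ² satisfy Curl^s( Σ_{i=1}^{3} φ_i γ_i )(x) = 0 for all x∈ℝ², then γ₁=γ₂=γ₃=0. Equivalently, the six matrix-valued functions Curl^s(φ_i e₁), Curl^s(φ_i e₂), i=1,2,3 (with e₁=(1,0)ᵀ, e₂=(0,1)ᵀ), are linearly independent over ℝ. -/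
/-!
`Curl^s r = 0` says that `Dr(x)` is a multiple `s(x) • id` of the identity: the skew 2×2 matrices
are the multiples of the rotation by `π/2` hidden in `Curl`. At a vertex `p_j` only `φ_{j±1}` have a
nonzero gradient, namely `∇λ_{j∓1}`, so differentiating along the two edges at `p_j` gives
`γ_{j+1} = s_j (p_{j-1} - p_j)` and `γ_{j-1} = s_j (p_{j+1} - p_j)`. The two resulting expressions
for `γ_i`, both multiples of the edge `p_{i+1} - p_{i-1}`, force `s_{i-1} = -s_{i+1}`; around the
odd cycle `ZMod 3` this gives `s = 0`.
-/

open Matrix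

theorem zmod3_add_one_add_one (j : ZMod 3) : j + 1 + 1 = j - 1 := by revert j; decide

theorem zmod3_sub_one_sub_one (j : ZMod 3) : j - 1 - 1 = j + 1 := by revert j; decide

theorem zmod3_add_one_ne_sub_one (j : ZMod 3) : j + 1 ≠ j - 1 := by revert j; decide

noncomputable def bubble {E : Type*} (lam : ZMod 3 → E → ℝ) (i : ZMod 3) (y : E) : ℝ :=
  lam (i - 1) y * lam (i + 1) y

section Bubble

variable {E F : Type*} [NormedAddCommGroup E] [NormedSpace ℝ E]
  [NormedAddCommGroup F] [NormedSpace ℝ F]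
  {lam : ZMod 3 → E → ℝ} {ℓ : ZMod 3 → E →L[ℝ] ℝ} {c : ZMod 3 → ℝ}

theorem hasFDerivAt_sum_bubble_smul (hlam : ∀ k y, lam k y = ℓ k y + c k)
    (γ : ZMod 3 → F) (x : E) :
    HasFDerivAt (fun y => ∑ i, bubble lam i y • γ i)
      (∑ i, (lam (i - 1) x • ℓ (i + 1) + lam (i + 1) x • ℓ (i - 1)).smulRight (γ i)) x := by
  have hD : ∀ k, HasFDerivAt (lam k) (ℓ k) x := fun k => by
    rw [show lam k = fun y => ℓ k y + c k from funext (hlam k)]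
    exact (ℓ k).hasFDerivAt.add_const (c k)
  exact HasFDerivAt.fun_sum fun i _ => ((hD (i - 1)).mul (hD (i + 1))).smul_const (γ i)

theorem fderiv_sum_bubble_smul_vertex (hlam : ∀ k y, lam k y = ℓ k y + c k) {p : ZMod 3 → E}
    (hval : ∀ k j, lam k (p j) = if k = j then 1 else 0) (γ : ZMod 3 → F) (j : ZMod 3) (w : E) :
    fderiv ℝ (fun y => ∑ i, bubble lam i y • γ i) (p j) w =
      ℓ (j - 1) w • γ (j + 1) + ℓ (j + 1) w • γ (j - 1) := by
  have hprev (i : ZMod 3) : i - 1 = j ↔ i = j + 1 := sub_eq_iff_eq_add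
  have hnext (i : ZMod 3) : i + 1 = j ↔ i = j - 1 := eq_sub_iff_add_eq.symm
  rw [(hasFDerivAt_sum_bubble_smul hlam γ (p j)).fderiv]
  simp only [hval, hprev, hnext, ite_smul, one_smul, zero_smul, _root_.sum_apply,
    ContinuousLinearMap.smulRight_apply, _root_.add_apply, DFunLike.ite_apply, _root_.zero_apply,
    add_smul, Finset.sum_add_distrib, Finset.sum_ite_eq', Finset.mem_univ, if_true,
    zmod3_add_one_add_one, zmod3_sub_one_sub_one]

end Bubble

theorem injective_of_eval_eq_ite {ι X : Type*} [DecidableEq ι] {p : ι → X} {lam : ι → X → ℝ}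
    (hval : ∀ k j, lam k (p j) = if k = j then 1 else 0) : Function.Injective p := by
  intro i j hij
  by_contra hne
  simpa [hval, hne] using congrArg (lam i) hij

theorem exists_eq_continuousLinearMap_add_const {f : (Fin 2 → ℝ) → ℝ}
    (hf : ∃ a b c : ℝ, ∀ x, f x = a * x 0 + b * x 1 + c) :
    ∃ (ℓ : (Fin 2 → ℝ) →L[ℝ] ℝ) (c : ℝ), ∀ x, f x = ℓ x + c := by
  obtain ⟨a, b, c, hf⟩ := hf
  exact ⟨a • .proj 0 + b • .proj 1, c, fun x => by simp [hf]⟩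

theorem exists_fderiv_eq_smul_of_curlS_eq_zero {r : (Fin 2 → ℝ) → Fin 2 → ℝ} {x : Fin 2 → ℝ}
    (h : CurlS r x = 0) : ∃ s : ℝ, ∀ w, fderiv ℝ r x w = s • w := by
  have h₀₀ := congrFun (congrFun h 0) 0
  have h₁₁ := congrFun (congrFun h 1) 1
  have h₀₁ := congrFun (congrFun h 0) 1
  simp only [CurlS, Curl, Matrix.smul_apply, Matrix.add_apply, of_apply, transpose_apply,
    Matrix.zero_apply, smul_eq_mul, mul_eq_zero, inv_eq_zero, OfNat.ofNat_ne_zero, add_self_eq_zero,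
    neg_eq_zero, false_or, one_ne_zero, Fin.isValue, if_true, if_false] at h₀₀ h₁₁ h₀₁
  have hdiag : fderiv ℝ r x ![0, 1] 1 = fderiv ℝ r x ![1, 0] 0 := by linarith
  refine ⟨fderiv ℝ r x ![1, 0] 0, fun w => ?_⟩
  have hw : w = w 0 • ![1, 0] + w 1 • ![0, 1] := by ext i; fin_cases i <;> simp
  rw [hw, map_add, map_smul, map_smul]
  ext i; fin_cases i <;> simp [h₀₀, h₁₁, hdiag, mul_comm]

theorem eq_zero_of_eq_smul_edges {V : Type*} [AddCommGroup V] [Module ℝ V] {p : ZMod 3 → V}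
    (hp : Function.Injective p) {γ : ZMod 3 → V} (s : ZMod 3 → ℝ)
    (hnext : ∀ j, γ (j + 1) = s j • (p (j - 1) - p j))
    (hprev : ∀ j, γ (j - 1) = s j • (p (j + 1) - p j)) (i : ZMod 3) : γ i = 0 := by
  have hs : ∀ i, s (i - 1) + s (i + 1) = 0 := by
    intro i
    have e₁ := hnext (i - 1)
    have e₂ := hprev (i + 1)
    rw [sub_add_cancel, zmod3_sub_one_sub_one] at e₁
    rw [add_sub_cancel_right, zmod3_add_one_add_one] at e₂
    have : (s (i - 1) + s (i + 1)) • (p (i + 1) - p (i - 1)) = 0 := by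
      rw [add_smul, ← e₁, ← neg_sub, smul_neg, ← e₂, add_neg_cancel]
    exact (smul_eq_zero.mp this).resolve_right
      (sub_ne_zero.mpr (hp.ne (zmod3_add_one_ne_sub_one i)))
  have hs₀ : ∀ j, s j = 0 := by
    intro j
    have h₁ := hs (j - 1)
    have h₂ := hs j
    have h₃ := hs (j + 1)
    rw [zmod3_sub_one_sub_one, sub_add_cancel] at h₁
    rw [add_sub_cancel_right, zmod3_add_one_add_one] at h₃
    linarith
  rw [← sub_add_cancel i 1, hnext, hs₀, zero_smul]

theorem curlS_bubble_linear_independence_general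
    (p : ZMod 3 → Fin 2 → ℝ)
    (lam : ZMod 3 → (Fin 2 → ℝ) → ℝ)
    (hlam_aff : ∀ k, ∃ a b c : ℝ, ∀ x, lam k x = a * x 0 + b * x 1 + c)
    (hlam_val : ∀ k j, lam k (p j) = if k = j then 1 else 0)
    (γ : ZMod 3 → Fin 2 → ℝ)
    (hzero : ∀ x, CurlS
      (fun y => ∑ i : ZMod 3, (lam (i - 1) y * lam (i + 1) y) • γ i) x = 0) :
    ∀ i, γ i = 0 := by
  choose ℓ c hlam using fun k => exists_eq_continuousLinearMap_add_const (hlam_aff k)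
  choose s hs using fun j => exists_fderiv_eq_smul_of_curlS_eq_zero (hzero (p j))
  have hℓ : ∀ k m j, ℓ k (p m - p j) = lam k (p m) - lam k (p j) := by
    intro k m j; simp [hlam]
  have hvertex (j : ZMod 3) (w : Fin 2 → ℝ) :=
    (fderiv_sum_bubble_smul_vertex hlam hlam_val γ j w).symm.trans (hs j w)
  refine eq_zero_of_eq_smul_edges (injective_of_eval_eq_ite hlam_val) s (fun j => ?_) (fun j => ?_)
  · simpa [hℓ, hlam_val, zmod3_add_one_ne_sub_one] using hvertex j (p (j - 1) - p j)
  · simpa [hℓ, hlam_val, (zmod3_add_one_ne_sub_one _).symm] using hvertex j (p (j + 1) - p j)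

/-- On a nondegenerate triangle with barycentric coordinates `λ_k` and bubbles
`φ_k = λ_{k−1} λ_{k+1}` (indices mod 3): if constant vectors `γ₁, γ₂, γ₃ ∈ ℝ²`
satisfy `Curl^s(Σ_i φ_i γ_i) = 0` everywhere, then `γ₁ = γ₂ = γ₃ = 0`;
equivalently the six fields `Curl^s(φ_i e_j)` are linearly independent. -/
theorem curlS_bubble_linear_independence
    (p : ZMod 3 → Fin 2 → ℝ) (hp : AffineIndependent ℝ p)
    (lam : ZMod 3 → (Fin 2 → ℝ) → ℝ)
    (hlam_aff : ∀ k, ∃ a b c : ℝ, ∀ x, lam k x = a * x 0 + b * x 1 + c)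
    (hlam_val : ∀ k j, lam k (p j) = if k = j then 1 else 0)
    (γ : ZMod 3 → Fin 2 → ℝ)
    (hzero : ∀ x, CurlS
      (fun y => ∑ i : ZMod 3, (lam (i - 1) y * lam (i + 1) y) • γ i) x = 0) :
    ∀ i, γ i = 0 :=
  curlS_bubble_linear_independence_general p lam hlam_aff hlam_val γ hzero
end

section
/- Let r, r′: ℝ²→ℝ² be continuously differentiable vector fields and let ℓ⊂ℝ² be a line. If r(x) = r′(x) for all x∈ℓ and Curl^s r(x) = Curl^s r′(x) for all x∈ℓ, then the total derivatives agree on the line: Dr(x) = Dr′(x) for every x∈ℓ. -/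
/-!
The difference `D` of the two Jacobians at a point of the line kills the direction `v` of the
line, because `r - r'` vanishes along it. Its symmetric curl also vanishes, and in entries the
symmetric curl of `D = (dᵢⱼ)` is `[[-d₀₁, (d₀₀ - d₁₁)/2], [(d₀₀ - d₁₁)/2, d₁₀]]`, so `D` is a
multiple `c • id` of the identity. Then `c • v = 0` with `v ≠ 0` forces `D = 0`.
-/

open Matrix

theorem HasFDerivAt.apply_eq_zero_of_forall_line_eq_zero {E F : Type*}
    [NormedAddCommGroup E] [NormedSpace ℝ E] [NormedAddCommGroup F] [NormedSpace ℝ F]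
    {f : E → F} {f' : E →L[ℝ] F} {a v : E} {s : ℝ} (hf : HasFDerivAt f f' (a + s • v))
    (hzero : ∀ t : ℝ, f (a + t • v) = 0) : f' v = 0 := by
  have hline : HasDerivAt (fun t : ℝ => a + t • v) v s := by
    simpa using ((hasDerivAt_id s).smul_const v).const_add a
  have hcomp := hf.comp_hasDerivAt s hline
  simp only [Function.comp_def, hzero] at hcomp
  exact hcomp.unique (hasDerivAt_const s 0)

theorem CurlS_sub {r r' : (Fin 2 → ℝ) → Fin 2 → ℝ} {x : Fin 2 → ℝ}
    (hr : DifferentiableAt ℝ r x) (hr' : DifferentiableAt ℝ r' x) :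
    CurlS (r - r') x = CurlS r x - CurlS r' x := by
  ext i j
  fin_cases i <;> fin_cases j <;> simp [CurlS, Curl, fderiv_sub hr hr'] <;> ring

theorem exists_fderiv_eq_smul_id_of_CurlS_eq_zero {f : (Fin 2 → ℝ) → Fin 2 → ℝ}
    {x : Fin 2 → ℝ} (h : CurlS f x = 0) :
    ∃ c : ℝ, fderiv ℝ f x = c • ContinuousLinearMap.id ℝ (Fin 2 → ℝ) := by
  have entry (i j : Fin 2) := congrFun (congrFun h i) j
  have h00 := entry 0 0
  have h01 := entry 0 1
  have h11 := entry 1 1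
  simp only [CurlS, Curl, Fin.isValue, Matrix.smul_apply, Matrix.add_apply, of_apply,
    ↓reduceIte, transpose_apply, smul_eq_mul, Matrix.zero_apply, mul_eq_zero, inv_eq_zero,
    OfNat.ofNat_ne_zero, add_self_eq_zero, neg_eq_zero, false_or, one_ne_zero] at h00 h01 h11
  refine ⟨fderiv ℝ f x ![1, 0] 0, ContinuousLinearMap.coe_injective
    (LinearMap.pi_ext fun j t => ?_)⟩
  rw [← mul_one t, ← smul_eq_mul, Pi.single_smul']
  simp only [ContinuousLinearMap.coe_coe, map_smul]
  congr 1
  fin_cases j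
  · have he : Pi.single (0 : Fin 2) (1 : ℝ) = ![1, 0] := by ext i; fin_cases i <;> rfl
    ext i; fin_cases i <;> simp [he, h11]
  · have he : Pi.single (1 : Fin 2) (1 : ℝ) = ![0, 1] := by ext i; fin_cases i <;> rfl
    ext i; fin_cases i <;> simp [he, h00]; linarith

/-- If two continuously differentiable vector fields `r, r' : ℝ² → ℝ²` agree on a
line `ℓ = {a + s v : s ∈ ℝ}` (with `v ≠ 0`) and their symmetric curls agree on `ℓ`,
then their total derivatives agree on `ℓ`. -/
theorem jacobians_agree_on_line_of_curlS_agree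
    (r r' : (Fin 2 → ℝ) → Fin 2 → ℝ)
    (hr : ContDiff ℝ 1 r) (hr' : ContDiff ℝ 1 r')
    (a v : Fin 2 → ℝ) (hv : v ≠ 0)
    (hval : ∀ s : ℝ, r (a + s • v) = r' (a + s • v))
    (hcurl : ∀ s : ℝ, CurlS r (a + s • v) = CurlS r' (a + s • v)) :
    ∀ s : ℝ, fderiv ℝ r (a + s • v) = fderiv ℝ r' (a + s • v) := by
  intro s
  have hdr := (hr.differentiable one_ne_zero) (a + s • v)
  have hdr' := (hr'.differentiable one_ne_zero) (a + s • v)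
  have hdiff : HasFDerivAt (r - r') (fderiv ℝ r (a + s • v) - fderiv ℝ r' (a + s • v))
      (a + s • v) := hdr.hasFDerivAt.sub hdr'.hasFDerivAt
  have hcurl_sub : CurlS (r - r') (a + s • v) = 0 := by
    rw [CurlS_sub hdr hdr', hcurl s, sub_self]
  obtain ⟨c, hc⟩ := exists_fderiv_eq_smul_id_of_CurlS_eq_zero hcurl_sub
  have hkill : (fderiv ℝ r (a + s • v) - fderiv ℝ r' (a + s • v)) v = 0 :=
    hdiff.apply_eq_zero_of_forall_line_eq_zero fun t => sub_eq_zero.mpr (hval t)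
  rw [← hdiff.fderiv, hc] at hkill
  have hc0 : c = 0 := (smul_eq_zero.mp hkill).resolve_right hv
  rw [← sub_eq_zero, ← hdiff.fderiv, hc, hc0, zero_smul]
end
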